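/- arXiv:2306.06250 — 2 statements merged into one kernel-verified Lean document; each statement's English description precedes it below -/
import Mathlib

section
/- Let d ≥ 2 and δ ∈ (0,1). Let A = {x ∈ ℝ^d : ‖x‖₂ ≤ 1, x₁ ≥ δ} be the spherical cap at height δ and H = {x ∈ ℝ^d : ‖x‖₂ ≤ 1, x₁ ≥ 0} the upper half of the unit ball. Then vol(A)/vol(H) ≥ ( (1−δ)^{(d+1)/2} / (√π · (d+1)) ) · Γ(d/2 + 1) / Γ(d/2 + 1/2), where vol denotes d-dimensional Lebesgue measure and Γ is the Gamma function. -/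
/-!
The cap contains the cylinder `[δ, c] × B^{d-1}(√(1 - c))` with `c = δ + (1 - δ)/(d + 1)`
(it fits in the ball because `c² + (1 - c) ≤ 1`), whose volume is `(1 - δ)/(d + 1) · ((1 - δ) d/(d + 1))^{(d-1)/2} · ω_{d-1}`, where `ω_k` is the volume of
the unit ball of `ℝ^k`. Since `(1 + 1/d)^{d-1} ≤ e ≤ 4`, this is at least
`(1 - δ)^{(d+1)/2} ω_{d-1} / (2 (d + 1))`. By the symmetry `x ↦ -x` the half ball has volume
`ω_d / 2`, and `ω_{d-1}/ω_d = Γ(d/2 + 1) / (√π Γ(d/2 + 1/2))`.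
-/

open MeasureTheory Metric Real

theorem one_le_four_mul_div_pow (k : ℕ) : 1 ≤ 4 * (((k : ℝ) + 1) / (k + 2)) ^ k := by
  have hinv : ((k : ℝ) + 2) / (k + 1) = 1 + ((k + 1 : ℕ) : ℝ)⁻¹ := by
    push_cast
    field_simp
    ring
  have hle : (((k : ℝ) + 2) / (k + 1)) ^ k ≤ 4 :=
    calc (((k : ℝ) + 2) / (k + 1)) ^ k ≤ (((k : ℝ) + 2) / (k + 1)) ^ (k + 1) :=
          pow_le_pow_right₀ ((one_le_div (by positivity)).2 (by linarith)) k.le_succ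
      _ ≤ exp 1 := hinv ▸ one_add_inv_pow_le_exp
      _ ≤ 4 := by linarith [exp_one_lt_d9]
  rw [← inv_div, inv_pow, le_mul_inv_iff₀ (by positivity)]
  linarith

theorem rpow_le_two_mul_mul_sqrt_pow (k : ℕ) {t : ℝ} (ht : 0 ≤ t) :
    t ^ (((k : ℝ) + 2) / 2) ≤ 2 * t * √(t * (k + 1) / (k + 2)) ^ k := by
  rw [← pow_le_pow_iff_left₀ (by positivity) (by positivity) two_ne_zero, mul_pow, ← pow_mul,
    mul_comm k, pow_mul, sq_sqrt (by positivity), ← rpow_natCast, ← rpow_mul ht]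
  have hsq : t ^ ((((k : ℝ) + 2) / 2) * ((2 : ℕ) : ℝ)) = t ^ (k + 2) := by
    rw [← rpow_natCast]; push_cast; ring_nf
  rw [hsq, mul_div_assoc, mul_pow]
  calc t ^ (k + 2) ≤ t ^ (k + 2) * (4 * (((k : ℝ) + 1) / (k + 2)) ^ k) :=
        le_mul_of_one_le_right (by positivity) (one_le_four_mul_div_pow k)
    _ = 2 ^ 2 * t ^ 2 * (t * (((k : ℝ) + 1) / (k + 2))) ^ k := by rw [mul_pow]; ring

namespace EuclideanSpace

variable {ι : Type*} [Fintype ι]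

theorem volume_setOf_apply_eq_zero (i : ι) :
    volume {x : EuclideanSpace ℝ ι | x i = 0} = 0 := by
  classical
  have hker : LinearMap.ker (proj (𝕜 := ℝ) (ι := ι) i).toLinearMap ≠ ⊤ := by
    rw [Ne, LinearMap.ker_eq_top]
    intro h
    simpa using LinearMap.congr_fun h (single i 1)
  exact Measure.addHaar_submodule volume _ hker

theorem two_mul_volume_inter_setOf_apply_nonneg {s : Set (EuclideanSpace ℝ ι)}
    (hs : MeasurableSet s) (hneg : -s = s) (i : ι) :
    2 * volume (s ∩ {x | 0 ≤ x i}) = volume s := by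
  set P := s ∩ {x | 0 ≤ x i}
  set N := s ∩ {x | x i ≤ 0}
  have hNP : -P = N := by
    ext x
    simp only [Set.mem_neg, P, N, Set.mem_inter_iff, Set.mem_ofPred_eq, PiLp.neg_apply, neg_nonneg]
    rw [← Set.mem_neg, hneg]
  have hunion : P ∪ N = s := by
    rw [← Set.inter_union_distrib_left, ← Set.ofPred_or]
    simp [le_total]
  have hinter : volume (P ∩ N) = 0 :=
    measure_mono_null (fun x ⟨⟨_, h₁⟩, ⟨_, h₂⟩⟩ => le_antisymm h₂ h₁)
      (volume_setOf_apply_eq_zero i)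
  have hN : MeasurableSet N :=
    hs.inter (measurableSet_le
      ((measurable_pi_apply i).comp (PiLp.continuous_ofLp 2 _).measurable) measurable_const)
  have := measure_union_add_inter (μ := volume) P hN
  rw [hunion, hinter, add_zero, ← hNP, Measure.measure_neg] at this
  rw [two_mul, this]

theorem toReal_volume_closedBall [Nonempty ι] (x : EuclideanSpace ℝ ι) {r : ℝ} (hr : 0 ≤ r) :
    (volume (closedBall x r)).toReal =
      r ^ Fintype.card ι * (√π ^ Fintype.card ι / Gamma (Fintype.card ι / 2 + 1)) := by
  rw [volume_closedBall, ENNReal.toReal_mul, ENNReal.toReal_pow, ENNReal.toReal_ofReal hr,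
    ENNReal.toReal_ofReal (by positivity)]

theorem toReal_volume_halfBall [Nonempty ι] (i : ι) :
    (volume {x : EuclideanSpace ℝ ι | ‖x‖ ≤ 1 ∧ 0 ≤ x i}).toReal =
      √π ^ Fintype.card ι / Gamma (Fintype.card ι / 2 + 1) / 2 := by
  have hhalf := two_mul_volume_inter_setOf_apply_nonneg (s := closedBall 0 1)
    measurableSet_closedBall (by rw [neg_closedBall, neg_zero]) i
  have hset : closedBall 0 1 ∩ {x : EuclideanSpace ℝ ι | 0 ≤ x i} =
      {x | ‖x‖ ≤ 1 ∧ 0 ≤ x i} := by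
    ext x
    simp
  have := congrArg ENNReal.toReal hhalf
  rw [ENNReal.toReal_mul, ENNReal.toReal_ofNat, toReal_volume_closedBall 0 zero_le_one, one_pow,
    one_mul, hset] at this
  rw [← this]
  ring

theorem volume_cylinder (n : ℕ) (a b r : ℝ) :
    volume {x : EuclideanSpace ℝ (Fin (n + 1)) |
        x 0 ∈ Set.Icc a b ∧ WithLp.toLp 2 (fun j : Fin n => x j.succ) ∈ closedBall 0 r} =
      ENNReal.ofReal (b - a) * volume (closedBall (0 : EuclideanSpace ℝ (Fin n)) r) := by
  have e := (volume_preserving_piFinSuccAbove (fun _ : Fin (n + 1) => ℝ) 0).comp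
    (volume_preserving_symm_measurableEquiv_toLp (Fin (n + 1)))
  have hpre : {x : EuclideanSpace ℝ (Fin (n + 1)) |
        x 0 ∈ Set.Icc a b ∧ WithLp.toLp 2 (fun j : Fin n => x j.succ) ∈ closedBall 0 r} =
      (MeasurableEquiv.piFinSuccAbove (fun _ : Fin (n + 1) => ℝ) 0 ∘
        (MeasurableEquiv.toLp 2 (Fin (n + 1) → ℝ)).symm) ⁻¹'
        (Set.Icc a b ×ˢ (WithLp.toLp 2 ⁻¹' closedBall (0 : EuclideanSpace ℝ (Fin n)) r)) := by
    ext x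
    simp only [Set.mem_ofPred_eq, Set.mem_preimage, Function.comp_apply,
      MeasurableEquiv.piFinSuccAbove_apply, Set.mem_prod]
    rfl
  rw [hpre, e.measure_preimage (measurableSet_Icc.prod
      (measurableSet_closedBall.preimage (PiLp.continuous_toLp 2 _).measurable)).nullMeasurableSet,
    Measure.volume_eq_prod, Measure.prod_prod, Real.volume_Icc,
    (PiLp.volume_preserving_toLp (Fin n)).measure_preimage
      measurableSet_closedBall.nullMeasurableSet]

theorem norm_sq_eq_apply_zero_sq_add_norm_sq (n : ℕ) (x : EuclideanSpace ℝ (Fin (n + 1))) :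
    ‖x‖ ^ 2 = x 0 ^ 2 + ‖WithLp.toLp 2 (fun j : Fin n => x j.succ)‖ ^ 2 := by
  simp only [real_norm_sq_eq, Fin.sum_univ_succ]

theorem cylinder_volume_le_toReal_volume_cap (n : ℕ) {δ c ρ : ℝ} (hδ : 0 ≤ δ) (hδc : δ ≤ c)
    (hρ : 0 ≤ ρ) (hcρ : c ^ 2 + ρ ^ 2 ≤ 1) :
    (c - δ) * (ρ ^ (n + 1) * (√π ^ (n + 1) / Gamma (((n : ℝ) + 1) / 2 + 1))) ≤
      (volume {x : EuclideanSpace ℝ (Fin (n + 2)) | ‖x‖ ≤ 1 ∧ δ ≤ x 0}).toReal := by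
  have hsub : {x : EuclideanSpace ℝ (Fin (n + 2)) |
        x 0 ∈ Set.Icc δ c ∧ WithLp.toLp 2 (fun j : Fin (n + 1) => x j.succ) ∈ closedBall 0 ρ} ⊆
      {x | ‖x‖ ≤ 1 ∧ δ ≤ x 0} := by
    rintro x ⟨⟨hδx, hxc⟩, hx⟩
    rw [mem_closedBall_zero_iff] at hx
    refine ⟨?_, hδx⟩
    have := norm_sq_eq_apply_zero_sq_add_norm_sq _ x
    nlinarith [norm_nonneg x, norm_nonneg (WithLp.toLp 2 (fun j : Fin (n + 1) => x j.succ))]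
  have hfin : volume {x : EuclideanSpace ℝ (Fin (n + 2)) | ‖x‖ ≤ 1 ∧ δ ≤ x 0} ≠ ⊤ :=
    measure_ne_top_of_subset (fun x hx => mem_closedBall_zero_iff.2 hx.1)
      measure_closedBall_lt_top.ne
  have := ENNReal.toReal_mono hfin (measure_mono hsub)
  rwa [volume_cylinder, ENNReal.toReal_mul, ENNReal.toReal_ofReal (by linarith),
    toReal_volume_closedBall 0 hρ, Fintype.card_fin, Nat.cast_succ] at this

theorem rpow_mul_le_toReal_volume_cap (n : ℕ) {δ : ℝ} (hδ0 : 0 ≤ δ) (hδ1 : δ ≤ 1) :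
    (1 - δ) ^ (((n : ℝ) + 3) / 2) / (2 * (n + 3)) *
        (√π ^ (n + 1) / Gamma (((n : ℝ) + 1) / 2 + 1)) ≤
      (volume {x : EuclideanSpace ℝ (Fin (n + 2)) | ‖x‖ ≤ 1 ∧ δ ≤ x 0}).toReal := by
  set t := 1 - δ
  set q := t * (n + 2) / (n + 3)
  have hq0 : 0 ≤ q := by positivity
  have hq1 : q ≤ 1 := div_le_one_of_le₀ (by nlinarith) (by positivity)
  have hheight : 1 - q - δ = t / (n + 3) := by
    simp only [q, t]; field_simp; ring
  have hcap := cylinder_volume_le_toReal_volume_cap n (c := 1 - q) (ρ := √q) hδ0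
    (by linarith [div_nonneg (sub_nonneg.2 hδ1) (by positivity : (0 : ℝ) ≤ n + 3)])
    (sqrt_nonneg q) (by rw [sq_sqrt hq0]; nlinarith)
  have hkey := rpow_le_two_mul_mul_sqrt_pow (n + 1) (sub_nonneg.2 hδ1)
  rw [show (((n + 1 : ℕ) : ℝ) + 2) / 2 = ((n : ℝ) + 3) / 2 by push_cast; ring,
    show (1 - δ) * ((n + 1 : ℕ) + 1) / ((n + 1 : ℕ) + 2) = q by push_cast; ring] at hkey
  calc _ ≤ 2 * t * √q ^ (n + 1) / (2 * (n + 3)) *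
        (√π ^ (n + 1) / Gamma (((n : ℝ) + 1) / 2 + 1)) := by
        gcongr
    _ = (1 - q - δ) * (√q ^ (n + 1) * (√π ^ (n + 1) / Gamma (((n : ℝ) + 1) / 2 + 1))) := by
        rw [hheight]; field_simp
    _ ≤ _ := hcap

end EuclideanSpace

/-- For `d ≥ 2` and `δ ∈ (0,1)`, the ratio of the volume of the spherical
cap `A = {x : ‖x‖ ≤ 1, x₁ ≥ δ}` to the volume of the upper half ball
`H = {x : ‖x‖ ≤ 1, x₁ ≥ 0}` is at least
`((1−δ)^{(d+1)/2} / (√π (d+1))) · Γ(d/2 + 1)/Γ(d/2 + 1/2)`. -/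
theorem cap_volume_ratio_lower_bound (d : ℕ) (hd : 2 ≤ d)
    (δ : ℝ) (hδ : δ ∈ Set.Ioo (0 : ℝ) 1) :
    (volume {x : EuclideanSpace ℝ (Fin d) | ‖x‖ ≤ 1 ∧ δ ≤ x ⟨0, by omega⟩}).toReal /
      (volume {x : EuclideanSpace ℝ (Fin d) | ‖x‖ ≤ 1 ∧ 0 ≤ x ⟨0, by omega⟩}).toReal ≥
    ((1 - δ) ^ (((d : ℝ) + 1) / 2) / (Real.sqrt Real.pi * ((d : ℝ) + 1))) *
      (Real.Gamma ((d : ℝ) / 2 + 1) / Real.Gamma ((d : ℝ) / 2 + 1 / 2)) := by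
  obtain ⟨n, rfl⟩ : ∃ n, d = n + 2 := ⟨d - 2, by omega⟩
  obtain ⟨hδ0, hδ1⟩ := hδ
  simp only [Fin.mk_zero, EuclideanSpace.toReal_volume_halfBall, Fintype.card_fin, ge_iff_le]
  rw [le_div_iff₀ (by positivity)]
  refine le_of_eq_of_le ?_ (EuclideanSpace.rpow_mul_le_toReal_volume_cap n hδ0.le hδ1.le)
  have hΓ : Gamma (((n + 2 : ℕ) : ℝ) / 2 + 1 / 2) = Gamma (((n : ℝ) + 1) / 2 + 1) := by
    push_cast; ring_nf
  rw [hΓ, pow_succ]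
  push_cast
  field_simp
  ring_nf
end

section
/- Let θ̂¹, θ̂⁰, x ∈ ℝ^d and δ ≥ 0, and set β := θ̂¹ − θ̂⁰. Let x' ∈ ℝ^d satisfy the best-response property: ‖x' − x‖₂ ≤ δ, and if there exists y ∈ ℝ^d with ‖y − x‖₂ ≤ δ and ⟨β, y⟩ ≥ δ‖β‖₂, then ⟨β, x'⟩ ≥ δ‖β‖₂. Define the assigned action a := 1 if ⟨β, x'⟩ ≥ δ‖β‖₂ and a := 0 otherwise. Then for every a* ∈ {0,1}, ⟨θ̂^{a*} − θ̂^{a}, x⟩ ≤ 0, where θ̂^{1} := θ̂¹ and θ̂^{0} := θ̂⁰. -/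
open scoped RealInnerProductSpace
open Classical

/-! The maximum of `⟪β, ·⟫` over the closed `δ`-ball around `x` is `⟪β, x⟫ + δ‖β‖`, so the
shifted threshold `δ‖β‖` is within reach exactly when `⟪β, x⟫ ≥ 0`. A best-responding agent
therefore receives action 1 precisely when `θ̂¹` scores at least as high as `θ̂⁰` on the true
context. -/

section ShiftedThreshold

variable {E : Type*} [NormedAddCommGroup E] [InnerProductSpace ℝ E]

theorem inner_le_inner_add_mul_norm_of_norm_sub_le {β x y : E} {δ : ℝ} (h : ‖y - x‖ ≤ δ) :
    ⟪β, y⟫ ≤ ⟪β, x⟫ + δ * ‖β‖ :=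
  calc ⟪β, y⟫ = ⟪β, x⟫ + ⟪β, y - x⟫ := by rw [inner_sub_right]; ring
    _ ≤ ⟪β, x⟫ + ‖β‖ * ‖y - x‖ := by gcongr; exact real_inner_le_norm β (y - x)
    _ ≤ ⟪β, x⟫ + δ * ‖β‖ := by rw [mul_comm]; gcongr

theorem exists_norm_sub_le_inner_eq (β x : E) {δ : ℝ} (hδ : 0 ≤ δ) :
    ∃ y, ‖y - x‖ ≤ δ ∧ ⟪β, y⟫ = ⟪β, x⟫ + δ * ‖β‖ := by
  rcases eq_or_ne β 0 with rfl | hβ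
  · exact ⟨x, by simpa using hδ, by simp⟩
  have hβ' : ‖β‖ ≠ 0 := norm_ne_zero_iff.mpr hβ
  refine ⟨x + (δ / ‖β‖) • β, le_of_eq ?_, ?_⟩
  · rw [add_sub_cancel_left, norm_smul, Real.norm_of_nonneg (by positivity)]
    field_simp
  · rw [inner_add_right, inner_smul_right, real_inner_self_eq_norm_sq]
    field_simp

theorem exists_norm_sub_le_threshold_le_inner_iff (β x : E) {δ : ℝ} (hδ : 0 ≤ δ) :
    (∃ y, ‖y - x‖ ≤ δ ∧ δ * ‖β‖ ≤ ⟪β, y⟫) ↔ 0 ≤ ⟪β, x⟫ := by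
  constructor
  · rintro ⟨y, hy, hthreshold⟩
    linarith [inner_le_inner_add_mul_norm_of_norm_sub_le (β := β) hy]
  · intro hx
    obtain ⟨y, hy, hinner⟩ := exists_norm_sub_le_inner_eq β x hδ
    exact ⟨y, hy, by linarith⟩

end ShiftedThreshold

theorem assigned_action_empirical_score_dominates_general {d : ℕ}
    (θhat1 θhat0 x x' : EuclideanSpace ℝ (Fin d)) (δ : ℝ)
    (hbudget : ‖x' - x‖ ≤ δ)
    (hbr : (∃ y : EuclideanSpace ℝ (Fin d), ‖y - x‖ ≤ δ ∧
        δ * ‖θhat1 - θhat0‖ ≤ ⟪θhat1 - θhat0, y⟫) →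
      δ * ‖θhat1 - θhat0‖ ≤ ⟪θhat1 - θhat0, x'⟫)
    (a : Bool)
    (ha : a = if δ * ‖θhat1 - θhat0‖ ≤ ⟪θhat1 - θhat0, x'⟫ then true else false)
    (astar : Bool) :
    ⟪(if astar then θhat1 else θhat0) - (if a then θhat1 else θhat0), x⟫ ≤ 0 := by
  have hδ : 0 ≤ δ := (norm_nonneg _).trans hbudget
  have hreach := exists_norm_sub_le_threshold_le_inner_iff (θhat1 - θhat0) x hδ
  by_cases hcross : δ * ‖θhat1 - θhat0‖ ≤ ⟪θhat1 - θhat0, x'⟫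
  · have hx : 0 ≤ ⟪θhat1 - θhat0, x⟫ := hreach.mp ⟨x', hbudget, hcross⟩
    rw [if_pos hcross] at ha
    subst ha
    cases astar <;> simp [inner_sub_left] at hx ⊢
    linarith
  · have hx : ⟪θhat1 - θhat0, x⟫ < 0 := not_le.mp fun h => hcross (hbr (hreach.mpr h))
    rw [if_neg hcross] at ha
    subst ha
    cases astar <;> simp [inner_sub_left] at hx ⊢
    linarith

/-- Key lemma of the regret decomposition. If the agent best-responds to the
shifted linear policy with slope `β = θ̂¹ − θ̂⁰` (moving within budget `δ` and crossing the
threshold `δ‖β‖` whenever feasible), and the assigned action is `a = 𝟙{⟨β, x'⟩ ≥ δ‖β‖}`,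
then for every alternative action `a*`, `⟨θ̂^{a*} − θ̂^{a}, x⟩ ≤ 0` on the true context `x`.
Actions are encoded as `Bool` (`true = 1`, `false = 0`). -/
theorem assigned_action_empirical_score_dominates {d : ℕ}
    (θhat1 θhat0 x x' : EuclideanSpace ℝ (Fin d)) (δ : ℝ) (hδ : 0 ≤ δ)
    (hbudget : ‖x' - x‖ ≤ δ)
    (hbr : (∃ y : EuclideanSpace ℝ (Fin d), ‖y - x‖ ≤ δ ∧
        δ * ‖θhat1 - θhat0‖ ≤ ⟪θhat1 - θhat0, y⟫) →
      δ * ‖θhat1 - θhat0‖ ≤ ⟪θhat1 - θhat0, x'⟫)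
    (a : Bool)
    (ha : a = if δ * ‖θhat1 - θhat0‖ ≤ ⟪θhat1 - θhat0, x'⟫ then true else false)
    (astar : Bool) :
    ⟪(if astar then θhat1 else θhat0) - (if a then θhat1 else θhat0), x⟫ ≤ 0 :=
  assigned_action_empirical_score_dominates_general θhat1 θhat0 x x' δ hbudget hbr a ha astar
end
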